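/- Any metric TSP instance on n = i+j+k+6 vertices whose optimal fractional subtour LP solution is isomorphic to x_{i,j,k} has integrality ratio at most 1 + 1/(3 + 2(1/(i+1) + 1/(j+1) + 1/(k+1))). -/

import Mathlib

open scoped Classical

/-- Vertex set of the fractional tour `x_{i,j,k}`: the three paths `X`, `Y`, `Z`. -/
def Vtype (i j k : ℕ) : Type := Fin (i + 2) ⊕ Fin (j + 2) ⊕ Fin (k + 2)

instance (i j k : ℕ) : Fintype (Vtype i j k) := by unfold Vtype; infer_instance
instance (i j k : ℕ) : DecidableEq (Vtype i j k) := by unfold Vtype; infer_instance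

/-- The fractional tour `x_{i,j,k}`: weight 1 on consecutive edges along each of the
three paths, weight 1/2 on the six triangle edges, 0 elsewhere. -/
noncomputable def xfrac (i j k : ℕ) : Vtype i j k → Vtype i j k → ℝ
  | Sum.inl s, Sum.inl t => if (s : ℕ) + 1 = t ∨ (t : ℕ) + 1 = s then 1 else 0
  | Sum.inr (Sum.inl s), Sum.inr (Sum.inl t) =>
      if (s : ℕ) + 1 = t ∨ (t : ℕ) + 1 = s then 1 else 0
  | Sum.inr (Sum.inr s), Sum.inr (Sum.inr t) =>
      if (s : ℕ) + 1 = t ∨ (t : ℕ) + 1 = s then 1 else 0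
  | Sum.inl s, Sum.inr (Sum.inl t) =>
      if ((s : ℕ) = 0 ∧ (t : ℕ) = 0) ∨ ((s : ℕ) = i + 1 ∧ (t : ℕ) = j + 1) then 1/2 else 0
  | Sum.inr (Sum.inl t), Sum.inl s =>
      if ((s : ℕ) = 0 ∧ (t : ℕ) = 0) ∨ ((s : ℕ) = i + 1 ∧ (t : ℕ) = j + 1) then 1/2 else 0
  | Sum.inl s, Sum.inr (Sum.inr t) =>
      if ((s : ℕ) = 0 ∧ (t : ℕ) = 0) ∨ ((s : ℕ) = i + 1 ∧ (t : ℕ) = k + 1) then 1/2 else 0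
  | Sum.inr (Sum.inr t), Sum.inl s =>
      if ((s : ℕ) = 0 ∧ (t : ℕ) = 0) ∨ ((s : ℕ) = i + 1 ∧ (t : ℕ) = k + 1) then 1/2 else 0
  | Sum.inr (Sum.inl s), Sum.inr (Sum.inr t) =>
      if ((s : ℕ) = 0 ∧ (t : ℕ) = 0) ∨ ((s : ℕ) = j + 1 ∧ (t : ℕ) = k + 1) then 1/2 else 0
  | Sum.inr (Sum.inr t), Sum.inr (Sum.inl s) =>
      if ((s : ℕ) = 0 ∧ (t : ℕ) = 0) ∨ ((s : ℕ) = j + 1 ∧ (t : ℕ) = k + 1) then 1/2 else 0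

/-- Feasibility for the subtour LP on a complete graph with vertex set `V`. -/
def SubtourFeasible {V : Type*} [Fintype V] (y : V → V → ℝ) : Prop :=
  (∀ v w, y v w = y w v) ∧ (∀ v, y v v = 0) ∧
  (∀ v w, 0 ≤ y v w ∧ y v w ≤ 1) ∧
  (∀ v, ∑ w, y v w = 2) ∧
  (∀ S : Finset V, S.Nonempty → S ≠ Finset.univ →
    2 ≤ ∑ v ∈ S, ∑ w ∈ Sᶜ, y v w)

/-- The cost of a fractional tour `y` with respect to the cost function `c`. -/
noncomputable def lpCost {V : Type*} [Fintype V] (c y : V → V → ℝ) : ℝ :=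
  (1 / 2) * ∑ v, ∑ w, c v w * y v w

/-- The length of the closed tour visiting the entries of `L` in cyclic order. -/
def cycleLength {α : Type*} (d : α → α → ℝ) (L : List α) : ℝ :=
  ((L.zip (L.rotate 1)).map (fun p => d p.1 p.2)).sum

/-!
Let `ℓX, ℓY, ℓZ` be the lengths of the three paths and `u` the sum of the six triangle edges,
so that the LP value is `ℓX + ℓY + ℓZ + u / 2`. For a path `P` with `p` edges there are `p + 2`
closed walks that traverse the other two paths once and walk out and back along `P` from both
ends, either skipping exactly one edge of `P` or covering all of `P` from one end. Every such walk
visits all vertices, so shortcutting it (triangle inequality) gives a tour that is no longer.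
Weighting the walks of the `X`-, `Y`- and `Z`-families by `(j+1)(k+1)`, `(i+1)(k+1)` and
`(i+1)(j+1)` turns their average length into exactly
`(1 + 1/(3 + 2(1/(i+1) + 1/(j+1) + 1/(k+1))))` times the LP value.
-/

open Finset

section PathLength

variable {α : Type*} (d : α → α → ℝ)

def pathLength : List α → ℝ
  | a :: b :: l => d a b + pathLength (b :: l)
  | _ => 0

@[simp] lemma pathLength_nil : pathLength d [] = 0 := rfl

@[simp] lemma pathLength_singleton (a : α) : pathLength d [a] = 0 := rfl

@[simp] lemma pathLength_cons_cons (a b : α) (l : List α) :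
    pathLength d (a :: b :: l) = d a b + pathLength d (b :: l) := rfl

variable {d}

lemma pathLength_append {L M : List α} {a b : α} (hL : L.getLast? = some a)
    (hM : M.head? = some b) :
    pathLength d (L ++ M) = pathLength d L + d a b + pathLength d M := by
  induction L with
  | nil => simp at hL
  | cons x L ih =>
    cases L with
    | nil =>
      cases M with
      | nil => simp at hM
      | cons m M => simp_all
    | cons y L =>
      rw [List.getLast?_cons_cons] at hL
      simp only [List.cons_append, pathLength_cons_cons] at ih ⊢
      rw [ih hL]
      ring

lemma pathLength_reverse (hd : ∀ a b, d a b = d b a) (L : List α) :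
    pathLength d L.reverse = pathLength d L := by
  induction L with
  | nil => rfl
  | cons a L ih =>
    cases L with
    | nil => rfl
    | cons b L =>
      rw [List.reverse_cons, pathLength_append (a := b) (b := a) (by simp) rfl, ih, hd]
      simp [add_comm]

lemma pathLength_reverse_append_self (hd : ∀ a b, d a b = d b a) (h0 : ∀ a, d a a = 0)
    (L : List α) : pathLength d (L.reverse ++ L) = 2 * pathLength d L := by
  cases L with
  | nil => simp
  | cons a L =>
    rw [pathLength_append (a := a) (b := a) (by simp) rfl, pathLength_reverse hd, h0]
    ring

lemma pathLength_append_reverse_self (hd : ∀ a b, d a b = d b a) (h0 : ∀ a, d a a = 0)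
    (L : List α) : pathLength d (L ++ L.reverse) = 2 * pathLength d L := by
  simpa [pathLength_reverse hd] using pathLength_reverse_append_self hd h0 L.reverse

lemma cycleLength_cons (a : α) (t : List α) :
    cycleLength d (a :: t) = pathLength d (a :: t ++ [a]) := by
  suffices ∀ x, (((x :: t).zip (t ++ [a])).map fun p => d p.1 p.2).sum =
      pathLength d (x :: t ++ [a]) by
    rw [cycleLength, List.rotate_cons_succ, List.rotate_zero, this]
  induction t with
  | nil => simp
  | cons y t ih => simp [ih]

lemma cycleLength_eq_pathLength_add {L : List α} {a b : α} (ha : L.head? = some a)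
    (hb : L.getLast? = some b) : cycleLength d L = pathLength d L + d b a := by
  cases L with
  | nil => simp at ha
  | cons x t =>
    obtain rfl : x = a := by simpa using ha
    rw [cycleLength_cons, pathLength_append hb rfl, pathLength_singleton, add_zero]

lemma pathLength_cons_le_cons_cons (h0 : ∀ a b, 0 ≤ d a b)
    (htri : ∀ a b c, d a c ≤ d a b + d b c) (a b : α) (L : List α) :
    pathLength d (a :: L) ≤ pathLength d (a :: b :: L) := by
  cases L with
  | nil => simpa using h0 a b
  | cons c L =>
    simp only [pathLength_cons_cons]
    linarith [htri a b c]

lemma pathLength_cons_le_of_sublist (h0 : ∀ a b, 0 ≤ d a b)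
    (htri : ∀ a b c, d a c ≤ d a b + d b c) {M L : List α} (h : M.Sublist L) (a : α) :
    pathLength d (a :: M) ≤ pathLength d (a :: L) := by
  induction h generalizing a with
  | slnil => rfl
  | cons b _ ih => exact (ih a).trans (pathLength_cons_le_cons_cons h0 htri a b _)
  | cons_cons b _ ih => simpa using ih b

lemma exists_nodup_cycleLength_le (h0 : ∀ a b, 0 ≤ d a b)
    (htri : ∀ a b c, d a c ≤ d a b + d b c) (W : List α) :
    ∃ T : List α, T.Nodup ∧ (∀ v ∈ W, v ∈ T) ∧ cycleLength d T ≤ cycleLength d W := by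
  cases W with
  | nil => exact ⟨[], List.nodup_nil, by simp, le_rfl⟩
  | cons a t =>
    refine ⟨a :: (t.filter (· ≠ a)).dedup, ?_, ?_, ?_⟩
    · simp [List.nodup_dedup]
    · intro v hv
      by_cases hva : v = a <;> simp_all
    · rw [cycleLength_cons, cycleLength_cons]
      exact pathLength_cons_le_of_sublist h0 htri
        ((List.dedup_sublist _).trans List.filter_sublist |>.append (List.Sublist.refl _)) a

end PathLength

section SegmentList

variable {α : Type*} (f : ℕ → α)

def segmentList (a n : ℕ) : List α := (List.range' a (n + 1)).map f

@[simp] lemma length_segmentList (a n : ℕ) : (segmentList f a n).length = n + 1 := by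
  simp [segmentList]

@[simp] lemma head?_segmentList (a n : ℕ) : (segmentList f a n).head? = some (f a) := by
  simp [segmentList, List.range'_succ]

@[simp] lemma getLast?_segmentList (a n : ℕ) :
    (segmentList f a n).getLast? = some (f (a + n)) := by
  simp [segmentList, List.getLast?_range']

lemma segmentList_append (a m n : ℕ) :
    segmentList f a m ++ segmentList f (a + m + 1) n = segmentList f a (m + n + 1) := by
  rw [segmentList, segmentList, segmentList, ← List.map_append,
    show a + m + 1 = a + (m + 1) by ring, List.range'_append_1]
  congr 2
  ring

lemma segmentList_eq_append {e p : ℕ} (he : e < p) :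
    segmentList f 0 p = segmentList f 0 e ++ segmentList f (e + 1) (p - e - 1) := by
  rw [← zero_add (e + 1), ← add_assoc, segmentList_append]
  congr 1
  omega

lemma pathLength_segmentList (d : α → α → ℝ) (n : ℕ) :
    pathLength d (segmentList f 0 n) = ∑ t ∈ range n, d (f t) (f (t + 1)) := by
  induction n with
  | zero => simp [segmentList]
  | succ n ih =>
    rw [← segmentList_append f 0 n 0,
      pathLength_append (getLast?_segmentList f 0 n) (head?_segmentList f _ 0), ih,
      sum_range_succ]
    simp [segmentList]

end SegmentList

section DoublingWalk

variable {α : Type*} {d : α → α → ℝ}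

/-- For `0 < m < P.length` the walk uses every edge of `P` twice except `P[m-1] P[m]`, which it
skips; `m = 0` and `m = P.length` give the two walks that double all of `P`. -/
def doublingWalk (P Q R : List α) (m : ℕ) : List α :=
  Q ++ ((P.drop m).reverse ++ P.drop m) ++ R.reverse ++ (P.take m ++ (P.take m).reverse)

lemma mem_doublingWalk {P Q R : List α} {v : α} (h : v ∈ P ∨ v ∈ Q ∨ v ∈ R) (m : ℕ) :
    v ∈ doublingWalk P Q R m := by
  rw [← List.take_append_drop m P] at h
  simp only [doublingWalk, List.mem_append, List.mem_reverse] at h ⊢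
  tauto

lemma cycleLength_append_excursions (hd : ∀ a b, d a b = d b a) (h0 : ∀ a, d a a = 0)
    {Q R lo hi : List α} {q₀ q₁ r₀ r₁ l₀ h₁ : α}
    (hq₀ : Q.head? = some q₀) (hq₁ : Q.getLast? = some q₁) (hr₀ : R.head? = some r₀)
    (hr₁ : R.getLast? = some r₁) (hl₀ : lo.head? = some l₀) (hh₁ : hi.getLast? = some h₁) :
    cycleLength d (Q ++ (hi.reverse ++ hi) ++ R.reverse ++ (lo ++ lo.reverse)) =
      pathLength d Q + pathLength d R + 2 * pathLength d lo + 2 * pathLength d hi +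
        d q₁ h₁ + d h₁ r₁ + d r₀ l₀ + d l₀ q₀ := by
  rw [cycleLength_eq_pathLength_add (a := q₀) (b := l₀) (by simp [hq₀]) (by simp [hl₀]),
    pathLength_append (a := r₀) (b := l₀) (by simp [hr₀]) (by simp [hl₀]),
    pathLength_append (a := h₁) (b := r₁) (by simp [hh₁]) (by simp [hr₁]),
    pathLength_append (a := q₁) (b := h₁) hq₁ (by simp [hh₁]),
    pathLength_reverse_append_self hd h0, pathLength_append_reverse_self hd h0,
    pathLength_reverse hd]
  ring

lemma cycleLength_doublingWalk_zero (hd : ∀ a b, d a b = d b a) (h0 : ∀ a, d a a = 0)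
    {P Q R : List α} {q₀ q₁ r₀ r₁ p₁ : α}
    (hq₀ : Q.head? = some q₀) (hq₁ : Q.getLast? = some q₁) (hr₀ : R.head? = some r₀)
    (hr₁ : R.getLast? = some r₁) (hp₁ : P.getLast? = some p₁) :
    cycleLength d (doublingWalk P Q R 0) =
      pathLength d Q + pathLength d R + 2 * pathLength d P + d q₁ p₁ + d p₁ r₁ + d r₀ q₀ := by
  simp only [doublingWalk, List.drop_zero, List.take_zero, List.reverse_nil, List.append_nil]
  rw [cycleLength_eq_pathLength_add (a := q₀) (b := r₀) (by simp [hq₀]) (by simp [hr₀]),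
    pathLength_append (a := p₁) (b := r₁) (by simp [hp₁]) (by simp [hr₁]),
    pathLength_append (a := q₁) (b := p₁) hq₁ (by simp [hp₁]),
    pathLength_reverse_append_self hd h0, pathLength_reverse hd]
  ring

lemma cycleLength_doublingWalk_of_length_le (hd : ∀ a b, d a b = d b a)
    (h0 : ∀ a, d a a = 0) {P Q R : List α} {q₀ q₁ r₀ r₁ p₀ : α}
    (hq₀ : Q.head? = some q₀) (hq₁ : Q.getLast? = some q₁) (hr₀ : R.head? = some r₀)
    (hr₁ : R.getLast? = some r₁) (hp₀ : P.head? = some p₀) {m : ℕ} (hm : P.length ≤ m) :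
    cycleLength d (doublingWalk P Q R m) =
      pathLength d Q + pathLength d R + 2 * pathLength d P + d q₁ r₁ + d r₀ p₀ + d p₀ q₀ := by
  simp only [doublingWalk, List.drop_eq_nil_of_le hm, List.take_of_length_le hm,
    List.reverse_nil, List.append_nil]
  rw [cycleLength_eq_pathLength_add (a := q₀) (b := p₀) (by simp [hq₀]) (by simp [hp₀]),
    pathLength_append (a := r₀) (b := p₀) (by simp [hr₀]) (by simp [hp₀]),
    pathLength_append (a := q₁) (b := r₁) hq₁ (by simp [hr₁]),
    pathLength_append_reverse_self hd h0, pathLength_reverse hd]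
  ring

variable (f g h : ℕ → α) (p q r : ℕ)

theorem sum_cycleLength_doublingWalk (hd : ∀ a b, d a b = d b a) (h0 : ∀ a, d a a = 0) :
    ∑ m ∈ range (p + 2), cycleLength d
        (doublingWalk (segmentList f 0 p) (segmentList g 0 q) (segmentList h 0 r) m) =
      (p + 2) * (pathLength d (segmentList g 0 q) + pathLength d (segmentList h 0 r) +
          2 * pathLength d (segmentList f 0 p)) - 2 * pathLength d (segmentList f 0 p) +
        (p + 1) * (d (g q) (f p) + d (f p) (h r) + d (h 0) (f 0) + d (f 0) (g 0)) +
        (d (h 0) (g 0) + d (g q) (h r)) := by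
  have hg₀ := head?_segmentList g 0 q
  have hg₁ := getLast?_segmentList g 0 q
  have hh₀ := head?_segmentList h 0 r
  have hh₁ := getLast?_segmentList h 0 r
  have hf₀ := head?_segmentList f 0 p
  have hf₁ := getLast?_segmentList f 0 p
  simp only [zero_add] at hg₁ hh₁ hf₁
  have skip : ∀ e ∈ range p, cycleLength d
      (doublingWalk (segmentList f 0 p) (segmentList g 0 q) (segmentList h 0 r) (e + 1)) =
        pathLength d (segmentList g 0 q) + pathLength d (segmentList h 0 r) +
          2 * pathLength d (segmentList f 0 p) - 2 * d (f e) (f (e + 1)) +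
          (d (g q) (f p) + d (f p) (h r) + d (h 0) (f 0) + d (f 0) (g 0)) := by
    intro e he
    have he : e < p := mem_range.mp he
    have hhi : (segmentList f (e + 1) (p - e - 1)).getLast? = some (f p) := by
      rw [getLast?_segmentList]
      congr 2
      omega
    rw [doublingWalk, segmentList_eq_append f he, List.take_left' (by simp),
      List.drop_left' (by simp),
      cycleLength_append_excursions hd h0 hg₀ hg₁ hh₀ hh₁ (head?_segmentList f 0 e) hhi,
      pathLength_append (getLast?_segmentList f 0 e) (head?_segmentList f _ _)]
    simp only [zero_add]
    ring
  rw [sum_range_succ, sum_range_succ', sum_congr rfl skip,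
    cycleLength_doublingWalk_zero hd h0 hg₀ hg₁ hh₀ hh₁ hf₁,
    cycleLength_doublingWalk_of_length_le hd h0 hg₀ hg₁ hh₀ hh₁ hf₀ (by simp)]
  simp only [sum_add_distrib, sum_sub_distrib, ← mul_sum, ← pathLength_segmentList, sum_const,
    card_range, nsmul_eq_mul]
  ring

theorem mul_lt_of_forall_lt_cycleLength (hd : ∀ a b, d a b = d b a) (h0 : ∀ a, d a a = 0)
    {B : ℝ}
    (hB : ∀ W : List α, (∀ v ∈ segmentList f 0 p, v ∈ W) → (∀ v ∈ segmentList g 0 q, v ∈ W) →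
      (∀ v ∈ segmentList h 0 r, v ∈ W) → B < cycleLength d W) :
    (p + 2) * B <
      (p + 2) * (pathLength d (segmentList g 0 q) + pathLength d (segmentList h 0 r) +
          2 * pathLength d (segmentList f 0 p)) - 2 * pathLength d (segmentList f 0 p) +
        (p + 1) * (d (g q) (f p) + d (f p) (h r) + d (h 0) (f 0) + d (f 0) (g 0)) +
        (d (h 0) (g 0) + d (g q) (h r)) := by
  rw [← sum_cycleLength_doublingWalk f g h p q r hd h0]
  have hlt := sum_lt_sum_of_nonempty (s := range (p + 2)) (by simp) fun m _ =>
    hB _ (fun v hv => mem_doublingWalk (.inl hv) m)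
      (fun v hv => mem_doublingWalk (.inr (.inl hv)) m)
      (fun v hv => mem_doublingWalk (.inr (.inr hv)) m)
  simpa only [sum_const, card_range, nsmul_eq_mul, Nat.cast_add, Nat.cast_ofNat] using hlt

end DoublingWalk

/-- With weights `J K`, `I K`, `I J` the left-hand sides add up to
`(3 I J K + 2 (J K + I K + I J)) B` and the right-hand sides to exactly
`(4 I J K + 2 (J K + I K + I J)) (ℓX + ℓY + ℓZ + (xy₀ + ⋯ + yz₁) / 2)`. -/
lemma lt_mul_of_weighted_bounds {I J K B ℓX ℓY ℓZ xy₀ xz₀ yz₀ xy₁ xz₁ yz₁ : ℝ}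
    (hI : 0 < I) (hJ : 0 < J) (hK : 0 < K)
    (hX : (I + 2) * B < (I + 2) * (ℓY + ℓZ + 2 * ℓX) - 2 * ℓX +
      (I + 1) * (xy₁ + xz₁ + xz₀ + xy₀) + (yz₀ + yz₁))
    (hY : (J + 2) * B < (J + 2) * (ℓZ + ℓX + 2 * ℓY) - 2 * ℓY +
      (J + 1) * (yz₁ + xy₁ + xy₀ + yz₀) + (xz₀ + xz₁))
    (hZ : (K + 2) * B < (K + 2) * (ℓX + ℓY + 2 * ℓZ) - 2 * ℓZ +
      (K + 1) * (xz₁ + yz₁ + yz₀ + xz₀) + (xy₀ + xy₁)) :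
    B < (1 + 1 / (3 + 2 * (1 / I + 1 / J + 1 / K))) *
      (ℓX + ℓY + ℓZ + (xy₀ + xz₀ + yz₀ + xy₁ + xz₁ + yz₁) / 2) := by
  have weighted := add_lt_add (add_lt_add (mul_lt_mul_of_pos_left hX (mul_pos hJ hK))
    (mul_lt_mul_of_pos_left hY (mul_pos hI hK))) (mul_lt_mul_of_pos_left hZ (mul_pos hI hJ))
  have hden : 0 < 3 * I * J * K + 2 * (J * K + I * K + I * J) := by positivity
  have ratio : 1 + 1 / (3 + 2 * (1 / I + 1 / J + 1 / K)) =
      (4 * I * J * K + 2 * (J * K + I * K + I * J)) /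
        (3 * I * J * K + 2 * (J * K + I * K + I * J)) := by
    field_simp
    ring
  rw [ratio, div_mul_eq_mul_div, lt_div_iff₀ hden]
  linarith

section FinSums

lemma sum_sum_mul_ite_succ_eq {n : ℕ} (g : Fin (n + 2) → Fin (n + 2) → ℝ) :
    ∑ s, ∑ t, g s t * (if (s : ℕ) + 1 = t then 1 else 0) =
      ∑ e : Fin (n + 1), g e.castSucc e.succ := by
  have hlast : ∀ t : Fin (n + 2), ((Fin.last (n + 1) : ℕ) + 1 = t) = False := by
    intro t
    simp only [Fin.val_last, eq_iff_iff, iff_false]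
    omega
  rw [Fin.sum_univ_castSucc]
  simp only [hlast, if_false, mul_zero, sum_const_zero, add_zero]
  refine sum_congr rfl fun e _ => ?_
  rw [Fintype.sum_eq_single e.succ]
  · simp
  · intro t ht
    rw [if_neg, mul_zero]
    intro h
    exact ht (Fin.ext (by simp [← h]))

lemma sum_sum_mul_ite_adjacent {n : ℕ} (g : Fin (n + 2) → Fin (n + 2) → ℝ) :
    ∑ s, ∑ t, g s t * (if (s : ℕ) + 1 = t ∨ (t : ℕ) + 1 = s then 1 else 0) =
      ∑ e : Fin (n + 1), (g e.castSucc e.succ + g e.succ e.castSucc) := by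
  have split : ∀ s t : Fin (n + 2),
      g s t * (if (s : ℕ) + 1 = t ∨ (t : ℕ) + 1 = s then 1 else 0) =
        g s t * (if (s : ℕ) + 1 = t then 1 else 0) +
          g s t * (if (t : ℕ) + 1 = s then 1 else 0) := by
    intro s t
    by_cases h : (s : ℕ) + 1 = t
    · rw [if_pos (Or.inl h), if_pos h, if_neg (by omega)]
      ring
    · by_cases h' : (t : ℕ) + 1 = s <;> simp [h, h']
  have reflected : ∑ s, ∑ t, g s t * (if (t : ℕ) + 1 = s then 1 else 0) =
      ∑ e : Fin (n + 1), g e.succ e.castSucc := by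
    rw [sum_comm]
    exact sum_sum_mul_ite_succ_eq fun s t => g t s
  simp only [split, sum_add_distrib]
  rw [sum_sum_mul_ite_succ_eq, reflected]

lemma sum_sum_mul_ite_ends {p q : ℕ} (g : Fin (p + 2) → Fin (q + 2) → ℝ) :
    ∑ s, ∑ t, g s t *
        (if ((s : ℕ) = 0 ∧ (t : ℕ) = 0) ∨ ((s : ℕ) = p + 1 ∧ (t : ℕ) = q + 1) then 1 / 2
          else 0) =
      (g 0 0 + g (Fin.last _) (Fin.last _)) / 2 := by
  rw [← Fintype.sum_prod_type', Fintype.sum_eq_add (0, 0) (Fin.last _, Fin.last _)]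
  · simp only [Fin.val_zero, Fin.val_last, and_self, true_or, or_true, if_true]
    ring
  · simp [Prod.ext_iff, Fin.ext_iff]
  · rintro ⟨s, t⟩ ⟨h0, hl⟩
    rw [if_neg, mul_zero]
    simp only [ne_eq, Prod.ext_iff, Fin.ext_iff, Fin.val_zero, Fin.val_last] at h0 hl
    tauto

lemma sum_sum_mul_ite_ends_swap {p q : ℕ} (g : Fin (q + 2) → Fin (p + 2) → ℝ) :
    ∑ t, ∑ s, g t s *
        (if ((s : ℕ) = 0 ∧ (t : ℕ) = 0) ∨ ((s : ℕ) = p + 1 ∧ (t : ℕ) = q + 1) then 1 / 2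
          else 0) =
      (g 0 0 + g (Fin.last _) (Fin.last _)) / 2 := by
  rw [sum_comm]
  exact sum_sum_mul_ite_ends fun s t => g t s

lemma pathLength_segmentList_ofNat {α : Type*} (d : α → α → ℝ) {n : ℕ} (u : Fin (n + 2) → α) :
    pathLength d (segmentList (fun t => u (Fin.ofNat (n + 2) t)) 0 (n + 1)) =
      ∑ e : Fin (n + 1), d (u e.castSucc) (u e.succ) := by
  rw [pathLength_segmentList, ← Fin.sum_univ_eq_sum_range
    (fun t => d (u (Fin.ofNat (n + 2) t)) (u (Fin.ofNat (n + 2) (t + 1))))]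
  refine sum_congr rfl fun e _ => ?_
  congr 2
  · ext
    simp
  · ext
    simp only [Fin.ofNat_eq_cast, Fin.val_natCast, Fin.val_succ]
    exact Nat.mod_eq_of_lt (by omega)

end FinSums

section Xijk

variable {i j k : ℕ}

lemma sum_vtype (F : Vtype i j k → ℝ) :
    ∑ v, F v = ∑ s, F (Sum.inl s) + ∑ s, F (Sum.inr (Sum.inl s)) +
      ∑ s, F (Sum.inr (Sum.inr s)) := by
  rw [add_assoc]
  exact (Fintype.sum_sum_type F).trans (congrArg _ (Fintype.sum_sum_type _))

variable (i j k)

/- `Fin.ofNat` reduces indices modulo the number of vertices; only `0, …, i + 1` (resp. `j + 1`,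
`k + 1`) are used. -/
def vertX (t : ℕ) : Vtype i j k := Sum.inl (Fin.ofNat (i + 2) t)
def vertY (t : ℕ) : Vtype i j k := Sum.inr (Sum.inl (Fin.ofNat (j + 2) t))
def vertZ (t : ℕ) : Vtype i j k := Sum.inr (Sum.inr (Fin.ofNat (k + 2) t))

variable {i j k}

lemma mem_segmentList_vert (v : Vtype i j k) :
    v ∈ segmentList (vertX i j k) 0 (i + 1) ∨ v ∈ segmentList (vertY i j k) 0 (j + 1) ∨
      v ∈ segmentList (vertZ i j k) 0 (k + 1) := by
  rcases v with s | s | s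
  · exact .inl (List.mem_map.2 ⟨s, by simp [Nat.le_of_lt_succ s.2], congrArg Sum.inl (by simp)⟩)
  · exact .inr (.inl (List.mem_map.2 ⟨s, by simp [Nat.le_of_lt_succ s.2],
      congrArg (Sum.inr ∘ Sum.inl) (by simp)⟩))
  · exact .inr (.inr (List.mem_map.2 ⟨s, by simp [Nat.le_of_lt_succ s.2],
      congrArg (Sum.inr ∘ Sum.inr) (by simp)⟩))

lemma lpCost_xfrac (c : Vtype i j k → Vtype i j k → ℝ) (hsymm : ∀ v w, c v w = c w v) :
    lpCost c (xfrac i j k) =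
      pathLength c (segmentList (vertX i j k) 0 (i + 1)) +
      pathLength c (segmentList (vertY i j k) 0 (j + 1)) +
      pathLength c (segmentList (vertZ i j k) 0 (k + 1)) +
      (c (vertX i j k 0) (vertY i j k 0) + c (vertX i j k 0) (vertZ i j k 0) +
        c (vertY i j k 0) (vertZ i j k 0) + c (vertX i j k (i + 1)) (vertY i j k (j + 1)) +
        c (vertX i j k (i + 1)) (vertZ i j k (k + 1)) +
        c (vertY i j k (j + 1)) (vertZ i j k (k + 1))) / 2 := by
  have hX : pathLength c (segmentList (vertX i j k) 0 (i + 1)) = _ :=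
    pathLength_segmentList_ofNat c fun s => (Sum.inl s : Vtype i j k)
  have hY : pathLength c (segmentList (vertY i j k) 0 (j + 1)) = _ :=
    pathLength_segmentList_ofNat c fun s => (Sum.inr (Sum.inl s) : Vtype i j k)
  have hZ : pathLength c (segmentList (vertZ i j k) 0 (k + 1)) = _ :=
    pathLength_segmentList_ofNat c fun s => (Sum.inr (Sum.inr s) : Vtype i j k)
  have hlast (n : ℕ) : Fin.ofNat (n + 2) (n + 1) = Fin.last (n + 1) := by
    ext
    simp
  rw [hX, hY, hZ]
  simp only [vertX, vertY, vertZ, Fin.ofNat_zero, hlast]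
  simp only [lpCost, sum_vtype, xfrac, sum_add_distrib, sum_sum_mul_ite_adjacent,
    sum_sum_mul_ite_ends, sum_sum_mul_ite_ends_swap]
  simp only [hsymm (Sum.inl (Fin.succ _)) (Sum.inl (Fin.castSucc _)),
    hsymm (Sum.inr (Sum.inl (Fin.succ _))) (Sum.inr (Sum.inl (Fin.castSucc _))),
    hsymm (Sum.inr (Sum.inr (Fin.succ _))) (Sum.inr (Sum.inr (Fin.castSucc _))),
    hsymm (Sum.inr _) (Sum.inl _), hsymm (Sum.inr (Sum.inr _)) (Sum.inr (Sum.inl _))]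
  ring

end Xijk

theorem metric_integrality_ratio_bound_general (i j k : ℕ)
    (c : Vtype i j k → Vtype i j k → ℝ)
    (hsymm : ∀ v w, c v w = c w v) (hdiag : ∀ v, c v v = 0)
    (hnonneg : ∀ v w, 0 ≤ c v w)
    (htri : ∀ u v w, c u w ≤ c u v + c v w) :
    ∃ L : List (Vtype i j k), L.Nodup ∧ (∀ v, v ∈ L) ∧
      cycleLength c L ≤
        (1 + 1 / (3 + 2 * (1 / ((i : ℝ) + 1) + 1 / ((j : ℝ) + 1) + 1 / ((k : ℝ) + 1)))) *
          lpCost c (xfrac i j k) := by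
  by_contra! hlong
  have hwalk : ∀ W, (∀ v ∈ segmentList (vertX i j k) 0 (i + 1), v ∈ W) →
      (∀ v ∈ segmentList (vertY i j k) 0 (j + 1), v ∈ W) →
      (∀ v ∈ segmentList (vertZ i j k) 0 (k + 1), v ∈ W) → _ < cycleLength c W :=
    fun W hX hY hZ =>
      let ⟨T, hT, hWT, hTW⟩ := exists_nodup_cycleLength_le hnonneg htri W
      (hlong T hT fun v => hWT v <|
        (mem_segmentList_vert v).elim (hX v) (·.elim (hY v) (hZ v))).trans_le hTW
  have hX := mul_lt_of_forall_lt_cycleLength _ _ _ (i + 1) (j + 1) (k + 1) hsymm hdiag hwalk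
  have hY := mul_lt_of_forall_lt_cycleLength _ _ _ (j + 1) (k + 1) (i + 1) hsymm hdiag
    fun W hY hZ hX => hwalk W hX hY hZ
  have hZ := mul_lt_of_forall_lt_cycleLength _ _ _ (k + 1) (i + 1) (j + 1) hsymm hdiag
    fun W hZ hX hY => hwalk W hX hY hZ
  simp only [hsymm (vertY i j k _) (vertX i j k _), hsymm (vertZ i j k _) (vertX i j k _),
    hsymm (vertZ i j k _) (vertY i j k _)] at hX hY hZ
  push_cast at hX hY hZ
  have hbound := lt_mul_of_weighted_bounds (by positivity) (by positivity) (by positivity) hX hY hZ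
  rw [← lpCost_xfrac c hsymm] at hbound
  exact lt_irrefl _ hbound

/-- A metric TSP instance whose optimal fractional subtour-LP solution is (isomorphic to)
`x_{i,j,k}` has integrality ratio at most `1 + 1/(3 + 2(1/(i+1) + 1/(j+1) + 1/(k+1)))`. -/
theorem metric_integrality_ratio_bound (i j k : ℕ)
    (c : Vtype i j k → Vtype i j k → ℝ)
    (hsymm : ∀ v w, c v w = c w v) (hdiag : ∀ v, c v v = 0)
    (hnonneg : ∀ v w, 0 ≤ c v w)
    (htri : ∀ u v w, c u w ≤ c u v + c v w)
    (hfeas : SubtourFeasible (xfrac i j k))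
    (hopt : ∀ y : Vtype i j k → Vtype i j k → ℝ, SubtourFeasible y →
      lpCost c (xfrac i j k) ≤ lpCost c y) :
    ∃ L : List (Vtype i j k), L.Nodup ∧ (∀ v, v ∈ L) ∧
      cycleLength c L ≤
        (1 + 1 / (3 + 2 * (1 / ((i : ℝ) + 1) + 1 / ((j : ℝ) + 1) + 1 / ((k : ℝ) + 1)))) *
          lpCost c (xfrac i j k) :=
  metric_integrality_ratio_bound_general i j k c hsymm hdiag hnonneg htri
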